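/- Let N > 100 and let (x_1, …, x_N) be the unique strictly decreasing zero-mean solution of the MIW recursion. Then for every n with 1 ≤ n ≤ ⌊m/e³⌋, x_n ≥ (1/3)·√(2(1 + log(m/n))) and S_n ≥ (n/3)·√(2(1 + log(m/n))). -/

import Mathlib

noncomputable section

/-- Partial sums `S_n = x_1 + ⋯ + x_n`. -/
def Ssum (x : ℕ → ℝ) (n : ℕ) : ℝ := ∑ i ∈ Finset.Icc 1 n, x i

/-- `x` is a solution of the MIW recursion
`x_{n+1} = x_n - 1/(x_1 + ⋯ + x_n)` for `1 ≤ n ≤ N - 1`. -/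
def IsMIW (N : ℕ) (x : ℕ → ℝ) : Prop :=
  ∀ n, 1 ≤ n → n ≤ N - 1 → Ssum x n ≠ 0 ∧ x (n + 1) = x n - 1 / Ssum x n

/-- `m = (N+1)/2` if `N` is odd and `m = N/2` if `N` is even; in natural number
division both equal `(N+1)/2`. -/
def mIdx (N : ℕ) : ℕ := (N + 1) / 2

/-!
Partial sums of a strictly decreasing zero-sum sequence are positive, and comparing two
solutions of the recursion shows that the zero-mean solution is unique. The reflection
`k ↦ -x (N + 1 - k)` is again such a solution, so `x` is antisymmetric and `x_m ≥ 0`.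

The identity `S_n x_{n+1} = Q_n - n` for the sums of squares `Q_n` gives `Q_N = N - 1`, hence
`S_k ≤ √(k (N - 1))` by Cauchy–Schwarz. Telescoping the recursion from `n` to `m` then gives
`√(N - 1) x_n ≥ 2 (√m - √n)`, which suffices while `m / n ≤ e⁴`; summed over `n ≤ m` it gives
`S_m ≳ m^{3/2}`. Beyond `e⁴` one uses that the energy `x_k² + 2 log S_k` decreases, so
`x_n² ≥ 2 log (S_m / S_n) ≥ log (m / n) - 4 log 2`.
-/

open Finset

namespace MIW

def Qsum (x : ℕ → ℝ) (n : ℕ) : ℝ := ∑ i ∈ Icc 1 n, x i ^ 2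

@[simp]
lemma Ssum_zero (x : ℕ → ℝ) : Ssum x 0 = 0 := by simp [Ssum]

@[simp]
lemma Ssum_one (x : ℕ → ℝ) : Ssum x 1 = x 1 := by simp [Ssum]

lemma Ssum_succ (x : ℕ → ℝ) (n : ℕ) : Ssum x (n + 1) = Ssum x n + x (n + 1) :=
  sum_Icc_succ_top (Nat.le_add_left 1 n) x

@[simp]
lemma Qsum_zero (x : ℕ → ℝ) : Qsum x 0 = 0 := by simp [Qsum]

lemma Qsum_succ (x : ℕ → ℝ) (n : ℕ) : Qsum x (n + 1) = Qsum x n + x (n + 1) ^ 2 :=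
  sum_Icc_succ_top (Nat.le_add_left 1 n) _

lemma sq_Ssum_le_mul_Qsum (x : ℕ → ℝ) (n : ℕ) : Ssum x n ^ 2 ≤ n * Qsum x n := by
  simpa [Ssum, Qsum] using sq_sum_le_card_mul_sum_sq (s := Icc 1 n) (f := x)

lemma antitoneOn_of_succ_lt {N : ℕ} {x : ℕ → ℝ} (hdec : ∀ n, 1 ≤ n → n < N → x (n + 1) < x n) :
    AntitoneOn x (Set.Icc 1 N) :=
  (strictAntiOn_of_succ_lt Set.ordConnected_Icc fun n _ hn hn' => by
    simp only [Order.succ_eq_add_one, Set.mem_Icc] at hn hn'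
    exact hdec n hn.1 (by omega)).antitoneOn

lemma mul_le_Ssum {N : ℕ} {x : ℕ → ℝ} (hanti : AntitoneOn x (Set.Icc 1 N)) {n : ℕ}
    (hnN : n ≤ N) : n * x n ≤ Ssum x n := by
  rcases Nat.eq_zero_or_pos n with rfl | hn
  · simp
  simpa [Ssum] using card_nsmul_le_sum (Icc 1 n) x (x n) fun i hi => by
    simp only [mem_Icc] at hi
    exact hanti ⟨hi.1, by omega⟩ ⟨hn, hnN⟩ hi.2

lemma Ssum_pos_of_succ_lt {N : ℕ} {x : ℕ → ℝ} (hdec : ∀ n, 1 ≤ n → n < N → x (n + 1) < x n)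
    (h0 : Ssum x N = 0) {n : ℕ} (hn : 1 ≤ n) (hnN : n < N) : 0 < Ssum x n := by
  have hanti := antitoneOn_of_succ_lt hdec
  have head := mul_le_Ssum hanti hnN.le
  have tail : -Ssum x n ≤ (N - n : ℕ) * x (n + 1) := by
    have hsplit := sum_Ioc_consecutive x (Nat.zero_le n) hnN.le
    have htail := sum_le_card_nsmul (Ioc n N) x (x (n + 1)) fun i hi => by
      simp only [mem_Ioc] at hi
      exact hanti ⟨by omega, hnN⟩ ⟨by omega, hi.2⟩ hi.1
    simp only [Ssum, ← Icc_add_one_left_eq_Ioc, zero_add, Nat.card_Icc, Nat.add_sub_add_right,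
      nsmul_eq_mul] at *
    linarith
  have hlt : x (n + 1) < x n := hdec n hn hnN
  have hNn : (0 : ℝ) < (N - n : ℕ) := by exact_mod_cast Nat.sub_pos_of_lt hnN
  have hn' : (1 : ℝ) ≤ n := by exact_mod_cast hn
  nlinarith [mul_lt_mul_of_pos_left hlt hNn]

lemma Ssum_reflect {N : ℕ} {x : ℕ → ℝ} (h0 : Ssum x N = 0) {n : ℕ} (hn : n ≤ N) :
    Ssum (fun k => -x (N + 1 - k)) n = Ssum x (N - n) := by
  induction n with
  | zero => simpa using h0.symm
  | succ n ih =>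
    have hsplit := Ssum_succ x (N - (n + 1))
    rw [show N - (n + 1) + 1 = N - n by omega, ← ih (by omega)] at hsplit
    rw [Ssum_succ, show N + 1 - (n + 1) = N - n by omega]
    linarith

lemma two_mul_sqrt_sub_le_sum_one_div_sqrt {n M : ℕ} (hn : 1 ≤ n) (hnM : n ≤ M) :
    2 * (√M - √n) ≤ ∑ k ∈ Ico n M, 1 / √k := by
  induction M, hnM using Nat.le_induction with
  | base => simp
  | succ M hnM ih =>
    rw [sum_Ico_succ_top hnM]
    have hM : (0 : ℝ) < √M := Real.sqrt_pos.2 (by exact_mod_cast (by omega : 0 < M))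
    have hsq : √(M + 1 : ℕ) ^ 2 = √M ^ 2 + 1 := by
      push_cast
      rw [Real.sq_sqrt (by positivity), Real.sq_sqrt (by positivity)]
    have hle : √M ≤ √(M + 1 : ℕ) := Real.sqrt_le_sqrt (by exact_mod_cast M.le_succ)
    have hstep : 2 * (√(M + 1 : ℕ) - √M) ≤ 1 / √M := by
      rw [le_div_iff₀ hM]
      nlinarith
    linarith

lemma sum_sqrt_le (M : ℕ) : ∑ j ∈ Icc 1 M, √j ≤ 2 / 3 * M * √M + √M := by
  induction M with
  | zero => simp
  | succ M ih =>
    rw [sum_Icc_succ_top (by omega)]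
    set a := √M
    set b := √(M + 1 : ℕ)
    have ha : a ^ 2 = M := Real.sq_sqrt M.cast_nonneg
    have hb : b ^ 2 = M + 1 := by simp only [b]; push_cast; exact Real.sq_sqrt (by positivity)
    have hsq : ((2 * a ^ 2 + 3) * a) ^ 2 ≤ (2 * b ^ 2 * b) ^ 2 := by
      rw [mul_pow, mul_pow, hb, ← ha]
      nlinarith [sq_nonneg a]
    have hstep : (2 * a ^ 2 + 3) * a ≤ 2 * b ^ 2 * b :=
      (pow_le_pow_iff_left₀ (by positivity) (by positivity) two_ne_zero).1 hsq
    rw [hb] at hstep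
    rw [← ha] at ih
    push_cast
    linarith

def IsPosMIW (N : ℕ) (x : ℕ → ℝ) : Prop :=
  ∀ n, 1 ≤ n → n ≤ N - 1 → 0 < Ssum x n ∧ x (n + 1) = x n - 1 / Ssum x n

lemma IsMIW.isPosMIW {N : ℕ} {x : ℕ → ℝ} (hx : IsMIW N x)
    (hdec : ∀ n, 1 ≤ n → n < N → x (n + 1) < x n) (h0 : Ssum x N = 0) : IsPosMIW N x :=
  fun n hn hnN => ⟨Ssum_pos_of_succ_lt hdec h0 hn (by omega), (hx n hn hnN).2⟩

namespace IsPosMIW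

variable {N : ℕ} {x y : ℕ → ℝ}

/-- The gap between two solutions grows along the recursion, since the one with the larger
partial sums takes the smaller steps. -/
lemma sub_le_sub_and_mul_le_Ssum_sub (hx : IsPosMIW N x) (hy : IsPosMIW N y) (h1 : x 1 ≤ y 1)
    {n : ℕ} (hn : 1 ≤ n) (hnN : n ≤ N) :
    y 1 - x 1 ≤ y n - x n ∧ n * (y 1 - x 1) ≤ Ssum y n - Ssum x n := by
  induction n, hn using Nat.le_induction with
  | base => simp
  | succ n hn ih =>
    obtain ⟨ihx, ihS⟩ := ih (by omega)
    obtain ⟨hSx, hx'⟩ := hx n hn (by omega)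
    obtain ⟨hSy, hy'⟩ := hy n hn (by omega)
    have hS : Ssum x n ≤ Ssum y n := by
      have : (0 : ℝ) ≤ n * (y 1 - x 1) := mul_nonneg n.cast_nonneg (by linarith)
      linarith
    have hstep : 1 / Ssum y n ≤ 1 / Ssum x n := one_div_le_one_div_of_le hSx hS
    rw [Ssum_succ, Ssum_succ, hx', hy']
    push_cast
    constructor <;> linarith

lemma eqOn_of_Ssum_eq_zero (hN : 1 ≤ N) (hx : IsPosMIW N x) (hy : IsPosMIW N y)
    (hx0 : Ssum x N = 0) (hy0 : Ssum y N = 0) : Set.EqOn x y (Set.Icc 1 N) := by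
  have hN' : (1 : ℝ) ≤ N := by exact_mod_cast hN
  have h1 : x 1 = y 1 := by
    rcases le_total (x 1) (y 1) with h | h
    · have := (hx.sub_le_sub_and_mul_le_Ssum_sub hy h hN le_rfl).2
      rw [hx0, hy0] at this
      nlinarith
    · have := (hy.sub_le_sub_and_mul_le_Ssum_sub hx h hN le_rfl).2
      rw [hx0, hy0] at this
      nlinarith
  rintro n ⟨hn, hnN⟩
  have := (hx.sub_le_sub_and_mul_le_Ssum_sub hy h1.le hn hnN).1
  have := (hy.sub_le_sub_and_mul_le_Ssum_sub hx h1.ge hn hnN).1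
  linarith

lemma reflect (hx : IsPosMIW N x) (h0 : Ssum x N = 0) :
    IsPosMIW N (fun k => -x (N + 1 - k)) := by
  intro n hn hnN
  obtain ⟨hS, hrec⟩ := hx (N - n) (by omega) (by omega)
  rw [Ssum_reflect h0 (by omega)]
  rw [show N - n + 1 = N + 1 - n by omega] at hrec
  refine ⟨hS, ?_⟩
  simp only [show N + 1 - (n + 1) = N - n by omega, hrec]
  ring

lemma eq_neg_reflect (hN : 1 ≤ N) (hx : IsPosMIW N x) (h0 : Ssum x N = 0) :
    Set.EqOn x (fun k => -x (N + 1 - k)) (Set.Icc 1 N) :=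
  hx.eqOn_of_Ssum_eq_zero hN (hx.reflect h0) h0 (by simpa using Ssum_reflect h0 le_rfl)

lemma Ssum_mul_succ (hx : IsPosMIW N x) {n : ℕ} (hn : n ≤ N - 1) :
    Ssum x n * x (n + 1) = Qsum x n - n := by
  induction n with
  | zero => simp
  | succ n ih =>
    obtain ⟨hS, hrec⟩ := hx (n + 1) (by omega) hn
    have hstep : Ssum x (n + 1) * x (n + 1 + 1) = Ssum x (n + 1) * x (n + 1) - 1 := by
      rw [hrec]; field_simp
    rw [hstep, Qsum_succ, Ssum_succ]
    push_cast
    linear_combination ih (by omega)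

lemma Qsum_eq (hN : 1 ≤ N) (hx : IsPosMIW N x) (h0 : Ssum x N = 0) : Qsum x N = N - 1 := by
  obtain ⟨M, rfl⟩ : ∃ M, N = M + 1 := ⟨N - 1, by omega⟩
  have h := hx.Ssum_mul_succ (n := M) (by omega)
  rw [Ssum_succ] at h0
  rw [Qsum_succ]
  push_cast
  linear_combination x (M + 1) * h0 - h

lemma sq_Ssum_le (hx : IsPosMIW N x) (h0 : Ssum x N = 0) {n : ℕ} (hn : 1 ≤ n) (hnN : n ≤ N) :
    Ssum x n ^ 2 ≤ n * (N - 1) := by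
  have hQ : Qsum x n ≤ Qsum x N :=
    sum_le_sum_of_subset_of_nonneg (Icc_subset_Icc_right hnN) fun i _ _ => sq_nonneg (x i)
  rw [hx.Qsum_eq (by omega) h0] at hQ
  calc Ssum x n ^ 2 ≤ n * Qsum x n := sq_Ssum_le_mul_Qsum x n
    _ ≤ n * (N - 1) := by gcongr

lemma eq_add_sum_one_div (hx : IsPosMIW N x) {n M : ℕ} (hn : 1 ≤ n) (hnM : n ≤ M) (hM : M ≤ N) :
    x n = x M + ∑ k ∈ Ico n M, 1 / Ssum x k := by
  induction M, hnM using Nat.le_induction with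
  | base => simp
  | succ M hnM ih =>
    rw [sum_Ico_succ_top hnM, (hx M (by omega) (by omega)).2, ih (by omega)]
    ring

/-- By `log t ≤ t - 1`, each step lowers the energy by at least `1 / S_k²`. -/
lemma energy_antitoneOn (hx : IsPosMIW N x) :
    AntitoneOn (fun k => x k ^ 2 + 2 * Real.log (Ssum x k)) (Set.Icc 1 (N - 1)) := by
  refine antitoneOn_of_succ_le Set.ordConnected_Icc fun k _ hk hk' => ?_
  simp only [Order.succ_eq_add_one, Set.mem_Icc] at hk hk' ⊢
  obtain ⟨hS, hrec⟩ := hx k hk.1 hk.2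
  have hS' : 0 < Ssum x (k + 1) := (hx (k + 1) (by omega) hk'.2).1
  have hlog : Real.log (Ssum x (k + 1)) - Real.log (Ssum x k) ≤ x (k + 1) / Ssum x k := by
    rw [← Real.log_div hS'.ne' hS.ne']
    calc Real.log (Ssum x (k + 1) / Ssum x k) ≤ Ssum x (k + 1) / Ssum x k - 1 :=
          Real.log_le_sub_one_of_pos (div_pos hS' hS)
      _ = x (k + 1) / Ssum x k := by rw [Ssum_succ]; field_simp; ring
  have hdrop : x (k + 1) ^ 2 + 2 * (x (k + 1) / Ssum x k) = x k ^ 2 - 1 / Ssum x k ^ 2 := by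
    rw [hrec]; field_simp; ring
  have : 0 < 1 / Ssum x k ^ 2 := by positivity
  linarith

lemma Ssum_le_sqrt_mul_sqrt (hx : IsPosMIW N x) (h0 : Ssum x N = 0) {n : ℕ} (hn : 1 ≤ n)
    (hnN : n ≤ N) : Ssum x n ≤ √n * √(N - 1) := by
  rw [← Real.sqrt_mul n.cast_nonneg]
  exact Real.le_sqrt_of_sq_le (hx.sq_Ssum_le h0 hn hnN)

lemma two_mul_sqrt_sub_le (hx : IsPosMIW N x) (h0 : Ssum x N = 0) {n M : ℕ} (hn : 1 ≤ n)
    (hnM : n ≤ M) (hM : M ≤ N) (hxM : 0 ≤ x M) : 2 * (√M - √n) ≤ √(N - 1) * x n := by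
  have hterm : ∀ k ∈ Ico n M, 1 / √k ≤ √(N - 1) * (1 / Ssum x k) := by
    intro k hk
    simp only [mem_Ico] at hk
    have hS := (hx k (by omega) (by omega)).1
    have hk : (0 : ℝ) < √k := Real.sqrt_pos.2 (by exact_mod_cast (by omega : 0 < k))
    rw [mul_one_div, div_le_div_iff₀ hk hS, one_mul, mul_comm]
    exact hx.Ssum_le_sqrt_mul_sqrt h0 (by omega) (by omega)
  calc 2 * (√M - √n) ≤ ∑ k ∈ Ico n M, 1 / √k := two_mul_sqrt_sub_le_sum_one_div_sqrt hn hnM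
    _ ≤ ∑ k ∈ Ico n M, √(N - 1) * (1 / Ssum x k) := sum_le_sum hterm
    _ = √(N - 1) * (x n - x M) := by rw [← mul_sum, hx.eq_add_sum_one_div hn hnM hM]; ring
    _ ≤ √(N - 1) * x n := by have := Real.sqrt_nonneg (N - 1 : ℝ); nlinarith

lemma two_mul_sqrt_mul_sub_three_le (hx : IsPosMIW N x) (h0 : Ssum x N = 0) {M : ℕ}
    (hM : M ≤ N) (hxM : 0 ≤ x M) : 2 * √M * (M - 3) ≤ 3 * (√(N - 1) * Ssum x M) := by
  have hterm : ∀ j ∈ Icc 1 M, 2 * (√M - √j) ≤ √(N - 1) * x j := fun j hj => by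
    simp only [mem_Icc] at hj
    exact hx.two_mul_sqrt_sub_le h0 hj.1 hj.2 hM hxM
  have hsum := sum_le_sum hterm
  rw [← mul_sum, ← mul_sum, sum_sub_distrib, sum_const, Nat.card_Icc, Nat.add_sub_cancel,
    nsmul_eq_mul] at hsum
  have := sum_sqrt_le M
  rw [Ssum]
  nlinarith

lemma nine_div_eight_le_sq (hx : IsPosMIW N x) (h0 : Ssum x N = 0) {n m : ℕ} (hn : 1 ≤ n)
    (h16 : 16 * n ≤ m) (hm : m ≤ N) (hxm : 0 ≤ x m) (hNm : (N : ℝ) - 1 ≤ 2 * m) :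
    9 / 8 ≤ x n ^ 2 := by
  have hsqrt : 4 * √n ≤ √m := by
    rw [Real.le_sqrt (by positivity) (by positivity), mul_pow, Real.sq_sqrt n.cast_nonneg]
    exact_mod_cast h16
  have h := hx.two_mul_sqrt_sub_le h0 hn (by omega) hm hxm
  have hsq : (3 / 2 * √m) ^ 2 ≤ (√(N - 1) * x n) ^ 2 :=
    pow_le_pow_left₀ (by positivity) (by linarith) 2
  have hN : (1 : ℝ) ≤ N := by exact_mod_cast (by omega : 1 ≤ N)
  have hm' : (16 : ℝ) ≤ m := by exact_mod_cast (by omega : 16 ≤ m)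
  rw [mul_pow, mul_pow, Real.sq_sqrt m.cast_nonneg, Real.sq_sqrt (by linarith)] at hsq
  nlinarith [sq_nonneg (x n)]

lemma sqrt_div_mul_Ssum_le (hx : IsPosMIW N x) (h0 : Ssum x N = 0) {n m : ℕ} (hn : 1 ≤ n)
    (hnm : n ≤ m) (h12 : 12 ≤ m) (hm : m ≤ N) (hxm : 0 ≤ x m) (hNm : (N : ℝ) - 1 ≤ 2 * m) :
    √(m / n) * Ssum x n ≤ 4 * Ssum x m := by
  have hSn := hx.Ssum_le_sqrt_mul_sqrt h0 hn (hnm.trans hm)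
  have hSm := hx.two_mul_sqrt_mul_sub_three_le h0 hm hxm
  have hN : (1 : ℝ) < N := by exact_mod_cast (by omega : 1 < N)
  have hm' : (12 : ℝ) ≤ m := by exact_mod_cast h12
  have hc : 0 < √(N - 1) := Real.sqrt_pos.2 (by linarith)
  have hcsq : √(N - 1) ^ 2 = N - 1 := Real.sq_sqrt (by linarith)
  have hmn : √(m / n) * √n = √m := by
    rw [← Real.sqrt_mul (by positivity), div_mul_cancel₀ _ (by positivity)]
  refine le_of_mul_le_mul_left ?_ hc
  calc √(N - 1) * (√(m / n) * Ssum x n)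
      ≤ √(N - 1) * (√(m / n) * (√n * √(N - 1))) := by gcongr
    _ = √m * (N - 1) := by rw [← hmn]; linear_combination √(m / n) * √n * hcsq
    _ ≤ √m * (2 * m) := by gcongr
    _ ≤ √(N - 1) * (4 * Ssum x m) := by nlinarith [Real.sqrt_nonneg (m : ℝ)]

lemma log_div_sub_le_sq (hx : IsPosMIW N x) (h0 : Ssum x N = 0) {n m : ℕ} (hn : 1 ≤ n)
    (hnm : n ≤ m) (h12 : 12 ≤ m) (hm : m ≤ N - 1) (hxm : 0 ≤ x m) (hNm : (N : ℝ) - 1 ≤ 2 * m) :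
    Real.log (m / n) - 4 * Real.log 2 ≤ x n ^ 2 := by
  have hE := hx.energy_antitoneOn ⟨hn, hnm.trans hm⟩ ⟨by omega, hm⟩ hnm
  have hSn := (hx n hn (hnm.trans hm)).1
  have hSm := (hx m (by omega) hm).1
  have hratio := hx.sqrt_div_mul_Ssum_le h0 hn hnm h12 (by omega) hxm hNm
  have hmn : (0 : ℝ) < m / n :=
    div_pos (by exact_mod_cast (by omega : 0 < m)) (by exact_mod_cast hn)
  have hlog := Real.log_le_log (by positivity) hratio
  rw [Real.log_mul (by positivity) hSn.ne', Real.log_mul (by norm_num) hSm.ne',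
    Real.log_sqrt hmn.le, show (4 : ℝ) = 2 ^ 2 by norm_num, Real.log_pow] at hlog
  simp only at hE
  push_cast at hlog
  nlinarith [sq_nonneg (x m)]

lemma nonneg_mIdx (hx : IsPosMIW N x) (hN : 1 ≤ N) (h0 : Ssum x N = 0)
    (hanti : AntitoneOn x (Set.Icc 1 N)) : 0 ≤ x (mIdx N) := by
  have hmem : mIdx N ∈ Set.Icc 1 N := by unfold mIdx; constructor <;> omega
  have hmem' : N + 1 - mIdx N ∈ Set.Icc 1 N := by unfold mIdx; constructor <;> omega
  have hrefl : x (mIdx N) = -x (N + 1 - mIdx N) := hx.eq_neg_reflect hN h0 hmem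
  have := hanti hmem hmem' (by unfold mIdx; omega)
  linarith

end IsPosMIW

lemma sixteen_lt_exp_three : (16 : ℝ) < Real.exp 3 := by
  have h : Real.exp 1 ^ 3 = Real.exp 3 := by rw [← Real.exp_nat_mul]; norm_num
  have h' : (2.7182818283 : ℝ) ^ 3 < Real.exp 1 ^ 3 :=
    pow_lt_pow_left₀ Real.exp_one_gt_d9 (by norm_num) (by norm_num)
  norm_num at h'
  linarith

end MIW

open MIW

theorem xn_Sn_lower_bounds (N : ℕ) (hN : 100 < N) (x : ℕ → ℝ)
    (hMIW : IsMIW N x) (hdec : ∀ n, 1 ≤ n → n < N → x (n + 1) < x n)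
    (hmean : ∑ i ∈ Finset.Icc 1 N, x i = 0) :
    ∀ n, 1 ≤ n → n ≤ Nat.floor ((mIdx N : ℝ) / Real.exp 3) →
      x n ≥ (1 / 3) * Real.sqrt (2 * (1 + Real.log ((mIdx N : ℝ) / (n : ℝ)))) ∧
      Ssum x n ≥ ((n : ℝ) / 3) * Real.sqrt (2 * (1 + Real.log ((mIdx N : ℝ) / (n : ℝ)))) := by
  intro n hn hnfl
  have hmN : mIdx N ≤ N - 1 ∧ 12 ≤ mIdx N ∧ N ≤ 2 * mIdx N + 1 := by unfold mIdx; omega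
  have hNm : (N : ℝ) - 1 ≤ 2 * mIdx N := by
    have : (N : ℝ) ≤ 2 * mIdx N + 1 := by exact_mod_cast hmN.2.2
    linarith
  have hx : IsPosMIW N x := hMIW.isPosMIW hdec hmean
  have hanti := antitoneOn_of_succ_lt hdec
  have hxm : 0 ≤ x (mIdx N) := hx.nonneg_mIdx (by omega) hmean hanti
  have h16 : 16 * n ≤ mIdx N := by
    rw [Nat.le_floor_iff (by positivity), le_div_iff₀ (Real.exp_pos 3)] at hnfl
    have : (n : ℝ) * 16 ≤ mIdx N := by nlinarith [sixteen_lt_exp_three]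
    exact_mod_cast (by linarith : (16 * n : ℝ) ≤ mIdx N)
  have hxn : 0 ≤ x n := hxm.trans (hanti ⟨hn, by omega⟩ ⟨by omega, by omega⟩ (by omega))
  have key : 2 * (1 + Real.log (mIdx N / n)) ≤ 9 * x n ^ 2 := by
    rcases le_or_gt (Real.log (mIdx N / n)) 4 with hL | hL
    · have := hx.nine_div_eight_le_sq hmean hn h16 (by omega) hxm hNm
      linarith
    · have := hx.log_div_sub_le_sq hmean hn (by omega) hmN.2.1 hmN.1 hxm hNm
      linarith [Real.log_two_lt_d9]
  have hxbound : 1 / 3 * √(2 * (1 + Real.log (mIdx N / n))) ≤ x n := by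
    have : √(2 * (1 + Real.log (mIdx N / n))) ≤ 3 * x n :=
      (Real.sqrt_le_left (by linarith)).2 (by linarith)
    linarith
  refine ⟨hxbound, ?_⟩
  calc (n : ℝ) / 3 * √(2 * (1 + Real.log (mIdx N / n)))
      = n * (1 / 3 * √(2 * (1 + Real.log (mIdx N / n)))) := by ring
    _ ≤ n * x n := by gcongr
    _ ≤ Ssum x n := mul_le_Ssum hanti (by omega)
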